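/- Let $g:\mathbb{R}^3\times\mathbb{R}\to\mathbb{R}$ be measurable with support contained in $B_{1/2}(0)\times(-1/4,1/4)$, integrable, and suppose there exists $\delta\in(0,1)$ with $\|g\|_\delta := \sup_{r>0,\ (\bar x,t)\in\mathbb{R}^3\times\mathbb{R}} r^{\delta-5}\int_{t-r^2}^{t+r^2}\int_{B_r(\bar x)}|g|\,dy\,ds < \infty$. Then for every $(x,t)\in\mathbb{R}^3\times\mathbb{R}$ one has $\int_{-\infty}^{\infty}\int_{\mathbb{R}^3} \frac{|g(y,s)|}{(|x-y|^2+|t-s|)^2}\,dy\,ds \le \max\big(C(\delta)\|g\|_\delta,\ 16\int_{-1/4}^{1/4}\int_{B_{1/2}(0)}|g|\,dy\,ds\big)$ for some constant $C(\delta)$ depending only on $\delta$. -/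

import Mathlib

/-
Split space-time around `(x, t)` into the far region `Q > 1` and the parabolic annuli
`4^{-(k+1)} < Q ≤ 4^{-k}`, where `Q = |x - y|² + |t - s|`. On the `k`-th annulus the kernel
`Q⁻²` is at most `16^{k+1}`, and the annulus lies in the parabolic cylinder of radius
`r_k = 2 · 2^{-k}`, whose `|g|`-mass is at most `K r_k^{5-δ}` by the Morrey bound. The annuli
therefore contribute a geometric series of ratio `2^{δ-1} < 1`. On the far region the kernel is
at most `1`, and the whole mass of `g` is at most `K` because its support lies in the unit cylinder.
-/

open MeasureTheory Metric Set
open scoped ENNReal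

noncomputable section

section ParabolicGeometry

variable {X : Type*} [PseudoMetricSpace X]

def parabolicCylinder (x : X) (t r : ℝ) : Set (X × ℝ) :=
  ball x r ×ˢ Ioo (t - r ^ 2) (t + r ^ 2)

def parabolicSqDist (x : X) (t : ℝ) (p : X × ℝ) : ℝ :=
  dist x p.1 ^ 2 + |t - p.2|

theorem parabolicSqDist_nonneg (x : X) (t : ℝ) (p : X × ℝ) : 0 ≤ parabolicSqDist x t p := by
  unfold parabolicSqDist; positivity

theorem continuous_parabolicSqDist (x : X) (t : ℝ) : Continuous (parabolicSqDist x t) := by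
  unfold parabolicSqDist; fun_prop

theorem mem_parabolicCylinder_of_parabolicSqDist_lt {x : X} {t r : ℝ} {p : X × ℝ} (hr : 0 ≤ r)
    (hp : parabolicSqDist x t p < r ^ 2) : p ∈ parabolicCylinder x t r := by
  have hdist : dist x p.1 ^ 2 < r ^ 2 := by
    have := abs_nonneg (t - p.2); unfold parabolicSqDist at hp; linarith
  have htime : |t - p.2| < r ^ 2 := by
    have := sq_nonneg (dist x p.1); unfold parabolicSqDist at hp; linarith
  refine ⟨?_, ?_, ?_⟩
  · rw [mem_ball, dist_comm]; exact lt_of_pow_lt_pow_left₀ 2 hr hdist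
  · linarith [le_abs_self (t - p.2)]
  · linarith [neg_le_abs (t - p.2)]

end ParabolicGeometry

theorem Iic_union_Ioi_union_iUnion_Ioc_pow {c : ℝ} (hc₀ : 0 < c) (hc₁ : c < 1) :
    Iic 0 ∪ Ioi 1 ∪ ⋃ n : ℕ, Ioc (c ^ (n + 1)) (c ^ n) = univ := by
  refine eq_univ_of_forall fun y => ?_
  rcases le_or_gt y 0 with hy₀ | hy₀
  · exact Or.inl (Or.inl hy₀)
  rcases lt_or_ge 1 y with hy₁ | hy₁
  · exact Or.inl (Or.inr hy₁)
  obtain ⟨n, hn⟩ := exists_nat_pow_near_of_lt_one hy₀ hy₁ hc₀ hc₁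
  exact Or.inr (mem_iUnion.2 ⟨n, hn⟩)

theorem sixteen_mul_half_rpow_lt_one {a : ℝ} (ha : 4 < a) : 16 * (1 / 2 : ℝ) ^ a < 1 := by
  have : (1 / 2 : ℝ) ^ a < (1 / 2) ^ (4 : ℝ) :=
    Real.rpow_lt_rpow_of_exponent_gt (by norm_num) (by norm_num) ha
  norm_num at this; linarith

def parabolicMorreyConst (a : ℝ) : ℝ :=
  16 * 2 ^ a / (1 - 16 * (1 / 2) ^ a)

theorem parabolicMorreyConst_nonneg {a : ℝ} (ha : 4 < a) : 0 ≤ parabolicMorreyConst a :=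
  div_nonneg (by positivity) (sub_nonneg.2 (sixteen_mul_half_rpow_lt_one ha).le)

section ParabolicKernel

variable {X : Type*} [PseudoMetricSpace X] [MeasurableSpace X] [OpensMeasurableSpace X]
  {μ : Measure (X × ℝ)} (f : X × ℝ → ℝ≥0∞) (x : X) (t : ℝ)

/-- The parabolic kernel `Q⁻²`, with the junk value `0` at `Q = 0`. -/
def parabolicKernel (p : X × ℝ) : ℝ≥0∞ :=
  ENNReal.ofReal ((parabolicSqDist x t p ^ 2)⁻¹)

theorem measurable_parabolicSqDist : Measurable (parabolicSqDist x t) :=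
  (continuous_parabolicSqDist x t).measurable

theorem setLIntegral_parabolicKernel_mul_eq_zero :
    ∫⁻ p in parabolicSqDist x t ⁻¹' Iic 0, parabolicKernel x t p * f p ∂μ = 0 := by
  refine le_antisymm ((setLIntegral_mono' (measurable_parabolicSqDist x t measurableSet_Iic)
    fun p hp => ?_).trans_eq (lintegral_zero (μ := μ.restrict _))) zero_le
  have hQ : parabolicSqDist x t p = 0 := le_antisymm hp (parabolicSqDist_nonneg x t p)
  simp [parabolicKernel, hQ]

theorem setLIntegral_parabolicKernel_mul_far_le :
    ∫⁻ p in parabolicSqDist x t ⁻¹' Ioi 1, parabolicKernel x t p * f p ∂μ ≤ ∫⁻ p, f p ∂μ := by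
  refine (setLIntegral_mono' (measurable_parabolicSqDist x t measurableSet_Ioi)
    fun p hp => ?_).trans (setLIntegral_le_lintegral _ _)
  have hQ : 1 ≤ parabolicSqDist x t p ^ 2 := one_le_pow₀ hp.le
  calc parabolicKernel x t p * f p ≤ 1 * f p := by
        gcongr
        exact ENNReal.ofReal_le_one.2 (inv_le_one_of_one_le₀ hQ)
    _ = f p := one_mul _

theorem setLIntegral_parabolicKernel_mul_annulus_le (k : ℕ) :
    ∫⁻ p in parabolicSqDist x t ⁻¹' Ioc ((1 / 4) ^ (k + 1)) ((1 / 4) ^ k),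
        parabolicKernel x t p * f p ∂μ ≤
      ENNReal.ofReal (16 ^ (k + 1)) *
        ∫⁻ p in parabolicCylinder x t (2 * (1 / 2) ^ k), f p ∂μ := by
  have hsub : parabolicSqDist x t ⁻¹' Ioc ((1 / 4) ^ (k + 1)) ((1 / 4) ^ k) ⊆
      parabolicCylinder x t (2 * (1 / 2) ^ k) := fun p hp =>
    mem_parabolicCylinder_of_parabolicSqDist_lt (by positivity) <| by
      have : (2 * (1 / 2 : ℝ) ^ k) ^ 2 = 4 * (1 / 4) ^ k := by
        rw [mul_pow, ← pow_mul, mul_comm k, pow_mul]; norm_num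
      have : (0 : ℝ) < (1 / 4) ^ k := by positivity
      linarith [hp.2]
  calc _ ≤ ∫⁻ p in parabolicSqDist x t ⁻¹' Ioc ((1 / 4) ^ (k + 1)) ((1 / 4) ^ k),
          ENNReal.ofReal (16 ^ (k + 1)) * f p ∂μ := by
        refine setLIntegral_mono' (measurable_parabolicSqDist x t measurableSet_Ioc)
          fun p hp => ?_
        unfold parabolicKernel
        gcongr
        calc (parabolicSqDist x t p ^ 2)⁻¹ ≤ (((1 / 4) ^ (k + 1)) ^ 2)⁻¹ := by
              gcongr; exact hp.1.le
          _ = 16 ^ (k + 1) := by rw [← pow_mul, mul_comm, pow_mul, ← inv_pow]; norm_num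
    _ = ENNReal.ofReal (16 ^ (k + 1)) *
          ∫⁻ p in parabolicSqDist x t ⁻¹' Ioc ((1 / 4) ^ (k + 1)) ((1 / 4) ^ k), f p ∂μ :=
        lintegral_const_mul' _ _ ENNReal.ofReal_ne_top
    _ ≤ _ := by gcongr

theorem setLIntegral_parabolicKernel_mul_annulus_le_of_morrey {a K : ℝ}
    (hmorrey : ∀ r, 0 < r → ∀ y s,
      ∫⁻ p in parabolicCylinder y s r, f p ∂μ ≤ ENNReal.ofReal (K * r ^ a)) (k : ℕ) :
    ∫⁻ p in parabolicSqDist x t ⁻¹' Ioc ((1 / 4) ^ (k + 1)) ((1 / 4) ^ k),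
        parabolicKernel x t p * f p ∂μ ≤
      ENNReal.ofReal (16 * 2 ^ a * K * (16 * (1 / 2) ^ a) ^ k) := by
  have hscale : (16 : ℝ) ^ (k + 1) * (K * (2 * (1 / 2) ^ k) ^ a) =
      16 * 2 ^ a * K * (16 * (1 / 2) ^ a) ^ k := by
    rw [Real.mul_rpow (by norm_num) (by positivity), ← Real.rpow_pow_comm (by norm_num),
      mul_pow, pow_succ]
    ring
  calc _ ≤ ENNReal.ofReal (16 ^ (k + 1)) * ENNReal.ofReal (K * (2 * (1 / 2) ^ k) ^ a) :=
        (setLIntegral_parabolicKernel_mul_annulus_le f x t k).trans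
          (by gcongr; exact hmorrey _ (by positivity) x t)
    _ = _ := by rw [← ENNReal.ofReal_mul (by positivity), hscale]

theorem lintegral_parabolicKernel_mul_le {a K : ℝ} (ha : 4 < a) (hK : 0 ≤ K)
    (hmorrey : ∀ r, 0 < r → ∀ y s,
      ∫⁻ p in parabolicCylinder y s r, f p ∂μ ≤ ENNReal.ofReal (K * r ^ a)) :
    ∫⁻ p, parabolicKernel x t p * f p ∂μ ≤
      ∫⁻ p, f p ∂μ + ENNReal.ofReal (parabolicMorreyConst a * K) := by
  set q : ℝ := 16 * (1 / 2) ^ a with hq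
  have hq₀ : 0 ≤ q := by positivity
  have hq₁ : q < 1 := sixteen_mul_half_rpow_lt_one ha
  have hannulus := setLIntegral_parabolicKernel_mul_annulus_le_of_morrey f x t hmorrey
  have hcover : parabolicSqDist x t ⁻¹' Iic 0 ∪ parabolicSqDist x t ⁻¹' Ioi 1 ∪
      ⋃ k : ℕ, parabolicSqDist x t ⁻¹' Ioc ((1 / 4) ^ (k + 1)) ((1 / 4) ^ k) = univ := by
    simp only [← preimage_union, ← preimage_iUnion,
      Iic_union_Ioi_union_iUnion_Ioc_pow (by norm_num : (0 : ℝ) < 1 / 4) (by norm_num),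
      preimage_univ]
  calc ∫⁻ p, parabolicKernel x t p * f p ∂μ
      = ∫⁻ p in parabolicSqDist x t ⁻¹' Iic 0 ∪ parabolicSqDist x t ⁻¹' Ioi 1 ∪
          ⋃ k : ℕ, parabolicSqDist x t ⁻¹' Ioc ((1 / 4) ^ (k + 1)) ((1 / 4) ^ k),
          parabolicKernel x t p * f p ∂μ := by rw [hcover, setLIntegral_univ]
    _ ≤ (0 + ∫⁻ p, f p ∂μ) + ∑' k : ℕ, ENNReal.ofReal (16 * 2 ^ a * K * q ^ k) := by
      refine (lintegral_union_le _ _ _).trans (add_le_add ((lintegral_union_le _ _ _).trans ?_)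
        ((lintegral_iUnion_le _ _).trans (ENNReal.tsum_le_tsum hannulus)))
      rw [setLIntegral_parabolicKernel_mul_eq_zero, zero_add, zero_add]
      exact setLIntegral_parabolicKernel_mul_far_le f x t
    _ = ∫⁻ p, f p ∂μ + ENNReal.ofReal (parabolicMorreyConst a * K) := by
      rw [zero_add, ← ENNReal.ofReal_tsum_of_nonneg (fun k => by positivity)
        ((summable_geometric_of_lt_one hq₀ hq₁).mul_left _), tsum_mul_left,
        tsum_geometric_of_lt_one hq₀ hq₁, parabolicMorreyConst, ← hq]
      congr 2
      ring

end ParabolicKernel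

theorem integral_abs_div_parabolicSqDist_sq_eq {X : Type*} [PseudoMetricSpace X]
    [MeasurableSpace X] [OpensMeasurableSpace X] {μ : Measure (X × ℝ)} {g : X × ℝ → ℝ}
    (hg : AEStronglyMeasurable g μ) (x : X) (t : ℝ) :
    ∫ p, |g p| / parabolicSqDist x t p ^ 2 ∂μ =
      (∫⁻ p, parabolicKernel x t p * ENNReal.ofReal |g p| ∂μ).toReal := by
  rw [integral_eq_lintegral_of_nonneg_ae (.of_forall fun p => by positivity)
    (by simpa only [Real.norm_eq_abs, Pi.div_def] using
      hg.norm.div₀ ((measurable_parabolicSqDist x t).pow_const 2).aestronglyMeasurable)]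
  congr 1
  refine lintegral_congr fun p => ?_
  rw [div_eq_inv_mul, ENNReal.ofReal_mul (by positivity), parabolicKernel]

theorem setLIntegral_ofReal_abs_le_of_rpow_neg_mul_integral_le {α : Type*} [MeasurableSpace α]
    {μ : Measure α} {g : α → ℝ} {s : Set α} (hg : IntegrableOn g s μ) {r a K : ℝ} (hr : 0 < r)
    (h : r ^ (-a) * ∫ p in s, |g p| ∂μ ≤ K) :
    ∫⁻ p in s, ENNReal.ofReal |g p| ∂μ ≤ ENNReal.ofReal (K * r ^ a) := by
  rw [← ofReal_integral_eq_lintegral_ofReal hg.abs (.of_forall fun p => abs_nonneg _)]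
  refine ENNReal.ofReal_le_ofReal ?_
  rwa [Real.rpow_neg hr.le, inv_mul_le_iff₀ (by positivity), mul_comm] at h

/-- **Parabolic Morrey bound implies boundedness of the singular integral.**
If `g` is measurable, integrable, supported in `B_{1/2}(0) × (-1/4,1/4)`, and satisfies the
(two-sided-in-time) parabolic Morrey bound with exponent `δ ∈ (0,1)` and constant `K`, then
for every `(x,t)` one has
`∫∫ |g(y,s)| / (|x-y|² + |t-s|)² ≤ max (C(δ) K) (16 ∫∫_{B_{1/2}×(-1/4,1/4)} |g|)`
for a constant `C(δ)` depending only on `δ`. -/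
theorem stmt_0 (δ : ℝ) (hδ : δ ∈ Set.Ioo (0:ℝ) 1) :
    ∃ C : ℝ, 0 < C ∧
      ∀ g : (EuclideanSpace ℝ (Fin 3)) × ℝ → ℝ, Measurable g →
        (Function.support g ⊆ (ball (0 : EuclideanSpace ℝ (Fin 3)) (1/2)) ×ˢ
          Ioo (-(1/4) : ℝ) (1/4)) →
        Integrable g →
        ∀ K : ℝ,
          (∀ r : ℝ, 0 < r → ∀ (xc : EuclideanSpace ℝ (Fin 3)) (t : ℝ),
            r ^ (δ - 5) *
              ∫ p in (ball xc r) ×ˢ Ioo (t - r^2) (t + r^2), |g p| ≤ K) →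
        ∀ (x : EuclideanSpace ℝ (Fin 3)) (t : ℝ),
          ∫ p : (EuclideanSpace ℝ (Fin 3)) × ℝ,
              |g p| / (‖x - p.1‖^2 + |t - p.2|)^2
            ≤ max (C * K)
              (16 * ∫ p in (ball (0 : EuclideanSpace ℝ (Fin 3)) (1/2)) ×ˢ
                  Ioo (-(1/4) : ℝ) (1/4), |g p|) := by
  have ha : 4 < 5 - δ := by linarith [hδ.2]
  have hc := parabolicMorreyConst_nonneg ha
  refine ⟨1 + parabolicMorreyConst (5 - δ), by linarith, ?_⟩
  intro g _ hsupp hint K hK x t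
  have hK₀ : 0 ≤ K :=
    (mul_nonneg (by positivity) (integral_nonneg fun _ => abs_nonneg _)).trans (hK 1 one_pos 0 0)
  have hmorrey (r : ℝ) (hr : 0 < r) (y : EuclideanSpace ℝ (Fin 3)) (s : ℝ) :
      ∫⁻ p in parabolicCylinder y s r, ENNReal.ofReal |g p| ≤ ENNReal.ofReal (K * r ^ (5 - δ)) :=
    setLIntegral_ofReal_abs_le_of_rpow_neg_mul_integral_le hint.integrableOn hr
      (by rw [neg_sub]; exact hK r hr y s)
  have hmass : ∫⁻ p, ENNReal.ofReal |g p| ≤ ENNReal.ofReal K := by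
    have hsub : Function.support (fun p => ENNReal.ofReal |g p|) ⊆ parabolicCylinder 0 0 1 :=
      (Function.support_comp_subset (g := fun y => ENNReal.ofReal |y|) (by simp) g).trans
        (hsupp.trans (prod_mono (ball_subset_ball (by norm_num))
          (Ioo_subset_Ioo (by norm_num) (by norm_num))))
    rw [← setLIntegral_eq_of_support_subset hsub]
    simpa using hmorrey 1 one_pos 0 0
  have hbound := lintegral_parabolicKernel_mul_le (μ := volume) (fun p => ENNReal.ofReal |g p|)
    x t ha hK₀ hmorrey
  have hkernel := integral_abs_div_parabolicSqDist_sq_eq hint.aestronglyMeasurable x t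
  simp only [parabolicSqDist, dist_eq_norm] at hkernel
  rw [hkernel]
  refine le_max_of_le_left (ENNReal.toReal_le_of_le_ofReal (by positivity) ?_)
  calc _ ≤ ENNReal.ofReal K + ENNReal.ofReal (parabolicMorreyConst (5 - δ) * K) :=
        hbound.trans (by gcongr)
    _ = _ := by rw [← ENNReal.ofReal_add hK₀ (by positivity)]; ring_nf
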